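/- arXiv:2308.00498 — 2 statements merged into one kernel-verified Lean document; each statement's English description precedes it below -/
import Mathlib

section
/- Let k ≥ 3 be odd, let (P^i) be the C_k-bootstrap process on the path P_n, and let r ∈ ℕ satisfy (k-1)^{r-1} - (k²-4k+2) ≤ n - 1. Then the pair {0, (k-1)^{r-1} - (k²-4k+2)} is not an edge of P^i for any i < r. -/
/-- One step of the `C_k`-bootstrap process: add every edge whose endpoints are
joined by a path of length `k-1` in the current graph. -/
def cycleStep (k : ℕ) {V : Type*} (G : SimpleGraph V) : SimpleGraph V where
  Adj u v := G.Adj u v ∨ (u ≠ v ∧ ∃ p : G.Walk u v, p.IsPath ∧ p.length = k - 1)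
  symm := by
    constructor
    intro u v h
    rcases h with h | ⟨hne, p, hp, hl⟩
    · exact Or.inl h.symm
    · exact Or.inr ⟨hne.symm, p.reverse, hp.reverse, by simpa using hl⟩
  loopless := by
    constructor
    intro v h
    rcases h with h | ⟨hne, _⟩
    · exact G.loopless.irrefl v h
    · exact hne rfl

/-- The `C_k`-bootstrap process on `G`. -/
def cycleProcess (k : ℕ) {V : Type*} (G : SimpleGraph V) : ℕ → SimpleGraph V
  | 0 => G
  | (i + 1) => cycleStep k (cycleProcess k G i)


/-- Membership in the numerical semigroup generated by `k-2` and `k` (in `ℤ`). -/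
def inS (k : ℕ) (z : ℤ) : Prop :=
  ∃ a b : ℤ, 0 ≤ a ∧ 0 ≤ b ∧ z = a * ((k : ℤ) - 2) + b * k

lemma inS_zero (k : ℕ) : inS k 0 := ⟨0, 0, le_refl _, le_refl _, by ring⟩

lemma inS_add {k : ℕ} {x y : ℤ} (hx : inS k x) (hy : inS k y) : inS k (x + y) := by
  obtain ⟨a, b, ha, hb, rfl⟩ := hx
  obtain ⟨c, d, hc, hd, rfl⟩ := hy
  exact ⟨a + c, b + d, by linarith, by linarith, by ring⟩

lemma inS_nonneg {k : ℕ} (hk : 3 ≤ k) {z : ℤ} (h : inS k z) : 0 ≤ z := by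
  obtain ⟨a, b, ha, hb, rfl⟩ := h
  have hk' : (3 : ℤ) ≤ (k : ℤ) := by exact_mod_cast hk
  nlinarith

lemma inS_km2 {k : ℕ} : inS k ((k : ℤ) - 2) := ⟨1, 0, zero_le_one, le_refl _, by ring⟩

lemma inS_k {k : ℕ} : inS k (k : ℤ) := ⟨0, 1, le_refl _, zero_le_one, by ring⟩

/-- small elements of the semigroup are `0` or `k-2` -/
lemma inS_small {k : ℕ} (hk : 3 ≤ k) {z : ℤ} (h : inS k z) (hz : z ≤ (k : ℤ) - 2) :
    z = 0 ∨ z = (k : ℤ) - 2 := by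
  obtain ⟨a, b, ha, hb, rfl⟩ := h
  have hk' : (3 : ℤ) ≤ (k : ℤ) := by exact_mod_cast hk
  have hb0 : b = 0 := by nlinarith
  subst hb0
  have h1 : a ≤ 1 := by nlinarith
  have : a = 0 ∨ a = 1 := by omega
  rcases this with rfl | rfl
  · left; ring
  · right; ring

/-- Frobenius completeness: every integer above `k²-4k+2` is in the semigroup. -/
lemma inS_of_big {k : ℕ} (hk : 3 ≤ k) (hodd : Odd k) {z : ℤ}
    (hz : (k : ℤ) ^ 2 - 4 * k + 2 < z) : inS k z := by
  have hK3 : (3 : ℤ) ≤ (k : ℤ) := by exact_mod_cast hk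
  obtain ⟨t, ht⟩ := hodd
  have hK : (k : ℤ) = 2 * (t : ℤ) + 1 := by exact_mod_cast ht
  set A : ℤ := (-z * ((t : ℤ) + 1)) % (k : ℤ) with hA
  set Q : ℤ := (-z * ((t : ℤ) + 1)) / (k : ℤ) with hQ
  have key : A + (k : ℤ) * Q = -z * ((t : ℤ) + 1) := Int.emod_add_mul_ediv _ _
  have ha0 : 0 ≤ A := Int.emod_nonneg _ (by intro h0; rw [h0] at hK3; norm_num at hK3)
  have haK : A < (k : ℤ) := Int.emod_lt_of_pos _ (by linarith)
  refine ⟨A, -(z + 2 * Q + A), ha0, ?_, by linear_combination 2 * key + z * hK⟩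
  -- nonnegativity of b
  have hbK : (-(z + 2 * Q + A)) * (k : ℤ) = z - A * ((k : ℤ) - 2) := by
    linear_combination (-2) * key - z * hK
  by_contra hb
  push_neg at hb
  have hb1 : -(z + 2 * Q + A) ≤ -1 := by omega
  have h1 : (-(z + 2 * Q + A)) * (k : ℤ) ≤ -1 * (k : ℤ) :=
    mul_le_mul_of_nonneg_right hb1 (by linarith)
  have h2 : A * ((k : ℤ) - 2) ≤ ((k : ℤ) - 1) * ((k : ℤ) - 2) :=
    mul_le_mul_of_nonneg_right (by omega) (by linarith)
  nlinarith

/-- The Frobenius number itself is not in the semigroup. -/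
lemma not_inS_F {k : ℕ} (hk : 3 ≤ k) (hodd : Odd k) :
    ¬ inS k ((k : ℤ) ^ 2 - 4 * k + 2) := by
  intro h
  obtain ⟨a, b, ha, hb, heq⟩ := h
  have hK3 : (3 : ℤ) ≤ (k : ℤ) := by exact_mod_cast hk
  rcases eq_or_lt_of_le hK3 with h3 | h5
  · -- k = 3 : F = -1 < 0
    rw [← h3] at heq
    nlinarith
  · -- k ≥ 5 (k ≥ 4 suffices for most steps, use oddness for parity)
    have hK5 : (5 : ℤ) ≤ (k : ℤ) := by
      obtain ⟨t, ht⟩ := hodd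
      have : (k : ℤ) = 2 * t + 1 := by exact_mod_cast ht
      omega
    -- (k-2) ∣ 2*(b+1)
    have hdvd : 2 * (b + 1) = ((k : ℤ) - 2) * ((k : ℤ) - 2 - a - b) := by
      linear_combination -heq
    have heven : Even (((k : ℤ) - 2) * ((k : ℤ) - 2 - a - b)) :=
      ⟨b + 1, by linarith⟩
    have hoddk : Odd ((k : ℤ) - 2) := by
      obtain ⟨t, ht⟩ := hodd
      exact ⟨(t : ℤ) - 1, by push_cast [ht]; ring⟩
    rcases Int.even_mul.mp heven with he | he
    · exact (Int.not_odd_iff_even.mpr he) hoddk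
    · obtain ⟨s, hs⟩ := he
      have hbs : 2 * (b + 1) = 2 * (((k : ℤ) - 2) * s) := by rw [hdvd, hs]; ring
      have hbs' : b + 1 = ((k : ℤ) - 2) * s := mul_left_cancel₀ two_ne_zero hbs
      have hs1 : 1 ≤ s := by nlinarith
      have hbk : (k : ℤ) - 3 ≤ b := by nlinarith
      nlinarith

open SimpleGraph

lemma pathGraph_isPath_mono {n : ℕ} :
    ∀ {u v : Fin n} (p : (pathGraph n).Walk u v), p.IsPath →
    (((v.val : ℤ) - u.val = p.length ∧
      ∀ z : Fin n, u.val ≤ z.val → z.val ≤ v.val → z ∈ p.support) ∨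
    ((u.val : ℤ) - v.val = p.length ∧
      ∀ z : Fin n, v.val ≤ z.val → z.val ≤ u.val → z ∈ p.support)) := by
  intro u v p
  induction p with
  | nil =>
    rename_i x
    intro _
    left
    refine ⟨by simp, ?_⟩
    intro z h1 h2
    have hz : z = x := Fin.ext (le_antisymm h2 h1)
    simp [hz]
  | @cons a w c hadj q ih =>
    intro hp
    rw [Walk.cons_isPath_iff] at hp
    obtain ⟨hq, hna⟩ := hp
    have hadj' := pathGraph_adj.mp hadj
    have h0 : (0 : ℤ) ≤ (q.length : ℤ) := Nat.cast_nonneg _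
    rcases ih hq with ⟨hlen, hivt⟩ | ⟨hlen, hivt⟩
    · -- q goes up from w to c
      rcases hadj' with hup | hdown
      · -- a + 1 = w : the cons continues upward
        left
        refine ⟨by push_cast [Walk.length_cons]; omega, ?_⟩
        intro z h1 h2
        rcases eq_or_lt_of_le h1 with he | hlt
        · have hz : z = a := Fin.ext he.symm
          simp [hz]
        · have : w.val ≤ z.val := by omega
          exact Walk.support_cons _ _ ▸ List.mem_cons_of_mem _ (hivt z this h2)
      · -- w + 1 = a : would backtrack
        by_cases hc : a.val ≤ c.val
        · exact absurd (hivt a (by omega) hc) hna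
        · push_neg at hc
          have hcw : c.val = w.val := by omega
          right
          refine ⟨by push_cast [Walk.length_cons]; omega, ?_⟩
          intro z h1 h2
          have : z.val = a.val ∨ z.val = c.val := by omega
          rcases this with hz | hz
          · have : z = a := Fin.ext hz
            simp [this]
          · have hzw : z = w := Fin.ext (by omega)
            exact Walk.support_cons _ _ ▸ List.mem_cons_of_mem _ (hzw ▸ q.start_mem_support)
    · -- q goes down from w to c
      rcases hadj' with hup | hdown
      · -- a + 1 = w : would backtrack
        by_cases hc : c.val ≤ a.val
        · exact absurd (hivt a hc (by omega)) hna
        · push_neg at hc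
          have hcw : c.val = w.val := by omega
          left
          refine ⟨by push_cast [Walk.length_cons]; omega, ?_⟩
          intro z h1 h2
          have : z.val = a.val ∨ z.val = c.val := by omega
          rcases this with hz | hz
          · have : z = a := Fin.ext hz
            simp [this]
          · have hzw : z = w := Fin.ext (by omega)
            exact Walk.support_cons _ _ ▸ List.mem_cons_of_mem _ (hzw ▸ q.start_mem_support)
      · -- w + 1 = a : continues downward
        right
        refine ⟨by push_cast [Walk.length_cons]; omega, ?_⟩
        intro z h1 h2
        rcases eq_or_lt_of_le h2 with he | hlt
        · have hz : z = a := Fin.ext he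
          simp [hz]
        · have : z.val ≤ w.val := by omega
          exact Walk.support_cons _ _ ▸ List.mem_cons_of_mem _ (hivt z h1 this)

open SimpleGraph

section walksum
variable {k n : ℕ}

/-- Telescoping sums along a walk whose edges all satisfy a two-sided semigroup bound. -/
lemma walk_sum (G : SimpleGraph (Fin n)) (t : ℤ)
    (hG : ∀ a b : Fin n, G.Adj a b →
      inS k (t - ((a.val : ℤ) - b.val)) ∧ inS k (t + ((a.val : ℤ) - b.val))) :
    ∀ {u v : Fin n} (p : G.Walk u v),
      inS k ((p.length : ℤ) * t - ((u.val : ℤ) - v.val)) ∧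
      inS k ((p.length : ℤ) * t + ((u.val : ℤ) - v.val)) := by
  intro u v p
  induction p with
  | nil => constructor <;> · simp only [Walk.length_nil, Nat.cast_zero, zero_mul, sub_self, zero_sub, zero_add, add_zero, sub_zero]; simpa using inS_zero k
  | @cons a w c hadj q ih =>
    obtain ⟨h1, h2⟩ := hG a w hadj
    obtain ⟨ih1, ih2⟩ := ih
    constructor
    · have := inS_add h1 ih1
      have he : ((Walk.cons hadj q).length : ℤ) * t - ((a.val : ℤ) - c.val)
          = (t - ((a.val : ℤ) - w.val)) + ((q.length : ℤ) * t - ((w.val : ℤ) - c.val)) := by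
        push_cast [Walk.length_cons]; ring
      rw [he]; exact this
    · have := inS_add h2 ih2
      have he : ((Walk.cons hadj q).length : ℤ) * t + ((a.val : ℤ) - c.val)
          = (t + ((a.val : ℤ) - w.val)) + ((q.length : ℤ) * t + ((w.val : ℤ) - c.val)) := by
        push_cast [Walk.length_cons]; ring
      rw [he]; exact this

end walksum

lemma edge_both {k : ℕ} (hk : 3 ≤ k) (hodd : Odd k) {i : ℕ} (hi : 1 ≤ i) {d : ℤ}
    (hd : d ≠ 0) (h : inS k (((k : ℤ) - 1) ^ i - |d|)) :
    inS k (((k : ℤ) - 1) ^ i + |d|) := by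
  have hK3 : (3 : ℤ) ≤ (k : ℤ) := by exact_mod_cast hk
  have hd1 : 1 ≤ |d| := Int.one_le_abs hd
  have hs0 : 0 ≤ ((k : ℤ) - 1) ^ i - |d| := inS_nonneg hk h
  rcases eq_or_lt_of_le hi with h1 | h2
  · -- i = 1
    subst h1
    rw [pow_one] at h hs0 ⊢
    have hsm := inS_small hk h (by linarith)
    rcases hsm with h0 | hkm2
    · have he : (k : ℤ) - 1 + |d| = ((k : ℤ) - 2) + k := by linarith
      rw [he]; exact inS_add inS_km2 inS_k
    · have he : (k : ℤ) - 1 + |d| = (k : ℤ) := by linarith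
      rw [he]; exact inS_k
  · -- i ≥ 2
    have hi2 : 2 ≤ i := h2
    have hp : ((k : ℤ) - 1) ^ 2 ≤ ((k : ℤ) - 1) ^ i :=
      pow_le_pow_right₀ (by linarith) hi2
    exact inS_of_big hk hodd (by nlinarith)

lemma key_invariant {k n : ℕ} (hk : 3 ≤ k) (hodd : Odd k) :
    ∀ i, 1 ≤ i → ∀ u v : Fin n,
      (cycleProcess k (SimpleGraph.pathGraph n) i).Adj u v →
      inS k (((k : ℤ) - 1) ^ i - |(u.val : ℤ) - v.val|) := by
  have hK3 : (3 : ℤ) ≤ (k : ℤ) := by exact_mod_cast hk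
  have hcast : ((k - 1 : ℕ) : ℤ) = (k : ℤ) - 1 := by omega
  intro i
  induction i with
  | zero => omega
  | succ i ih =>
    intro _ u v hadj
    simp only [cycleProcess, cycleStep] at hadj
    rcases Nat.eq_zero_or_pos i with rfl | hi1
    · -- time 1 : previous graph is the path graph
      simp only [cycleProcess] at hadj
      rcases hadj with hadj | ⟨hne, p, hp, hl⟩
      · have h1 := SimpleGraph.pathGraph_adj.mp hadj
        have : (u.val : ℤ) - v.val = 1 ∨ (u.val : ℤ) - v.val = -1 := by omega
        have habs : |(u.val : ℤ) - v.val| = 1 := by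
          rcases this with h | h <;> rw [h] <;> simp
        rw [habs]
        have he : ((k : ℤ) - 1) ^ (0 + 1) - 1 = (k : ℤ) - 2 := by ring
        rw [he]; exact inS_km2
      · rcases pathGraph_isPath_mono p hp with ⟨hlen, -⟩ | ⟨hlen, -⟩
        · have habs : |(u.val : ℤ) - v.val| = ((k : ℤ) - 1) := by
            rw [hl] at hlen; rw [abs_sub_comm, abs_of_nonneg (by omega)]; omega
          rw [habs]
          have he : ((k : ℤ) - 1) ^ (0 + 1) - ((k : ℤ) - 1) = 0 := by ring
          rw [he]; exact inS_zero k
        · have habs : |(u.val : ℤ) - v.val| = ((k : ℤ) - 1) := by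
            rw [hl] at hlen; rw [abs_of_nonneg (by omega)]; omega
          rw [habs]
          have he : ((k : ℤ) - 1) ^ (0 + 1) - ((k : ℤ) - 1) = 0 := by ring
          rw [he]; exact inS_zero k
    · -- time i+1 with i ≥ 1
      rcases hadj with hadj | ⟨hne, p, hp, hl⟩
      · have hprev := ih hi1 u v hadj
        have he : ((k : ℤ) - 1) ^ (i + 1) - |(u.val : ℤ) - v.val|
            = (((k : ℤ) - 1) ^ i - |(u.val : ℤ) - v.val|) + ((k : ℤ) - 1) ^ i * ((k : ℤ) - 2) := by
          ring
        rw [he]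
        exact inS_add hprev ⟨((k : ℤ) - 1) ^ i, 0, pow_nonneg (by linarith) _, le_refl _, by ring⟩
      · have hG : ∀ a b : Fin n, (cycleProcess k (SimpleGraph.pathGraph n) i).Adj a b →
            inS k (((k : ℤ) - 1) ^ i - ((a.val : ℤ) - b.val)) ∧
            inS k (((k : ℤ) - 1) ^ i + ((a.val : ℤ) - b.val)) := by
          intro a b hab
          have hne' : (a.val : ℤ) - b.val ≠ 0 := by
            intro h0
            exact hab.ne (Fin.ext (by omega))
          have h1 := ih hi1 a b hab
          have h2 := edge_both hk hodd hi1 hne' h1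
          rcases abs_cases ((a.val : ℤ) - b.val) with ⟨habs, -⟩ | ⟨habs, -⟩
          · rw [habs] at h1 h2; exact ⟨h1, h2⟩
          · rw [habs] at h1 h2
            constructor
            · have : ((k : ℤ) - 1) ^ i - ((a.val : ℤ) - b.val)
                  = ((k : ℤ) - 1) ^ i + -((a.val : ℤ) - b.val) := by ring
              rw [this]; exact h2
            · have : ((k : ℤ) - 1) ^ i + ((a.val : ℤ) - b.val)
                  = ((k : ℤ) - 1) ^ i - -((a.val : ℤ) - b.val) := by ring
              rw [this]; exact h1
        have hws := walk_sum (k := k) _ (((k : ℤ) - 1) ^ i) hG p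
        rw [hl, hcast] at hws
        rcases abs_cases ((u.val : ℤ) - v.val) with ⟨habs, -⟩ | ⟨habs, -⟩
        · rw [habs]
          have he : ((k : ℤ) - 1) ^ (i + 1) - ((u.val : ℤ) - v.val)
              = ((k : ℤ) - 1) * ((k : ℤ) - 1) ^ i - ((u.val : ℤ) - v.val) := by ring
          rw [he]; exact hws.1
        · rw [habs]
          have he : ((k : ℤ) - 1) ^ (i + 1) - -((u.val : ℤ) - v.val)
              = ((k : ℤ) - 1) * ((k : ℤ) - 1) ^ i + ((u.val : ℤ) - v.val) := by ring
          rw [he]; exact hws.2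

lemma pow_ne_F1 {k : ℕ} (hk : 3 ≤ k) (hodd : Odd k) (e : ℕ) :
    ((k : ℤ) - 1) ^ e ≠ (k : ℤ) ^ 2 - 4 * k + 3 := by
  have hK3 : (3 : ℤ) ≤ (k : ℤ) := by exact_mod_cast hk
  intro heq
  rcases eq_or_lt_of_le hK3 with h3 | h4
  · rw [← h3] at heq
    have : (0 : ℤ) < (3 - 1) ^ e := pow_pos (by norm_num) e
    rw [heq] at this; norm_num at this
  · have hK5 : (5 : ℤ) ≤ (k : ℤ) := by
      obtain ⟨t, ht⟩ := hodd
      have : (k : ℤ) = 2 * t + 1 := by exact_mod_cast ht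
      omega
    match e with
    | 0 => rw [pow_zero] at heq; nlinarith
    | 1 => rw [pow_one] at heq; nlinarith
    | (e + 2) =>
      have h2 : ((k : ℤ) - 1) ^ 2 ≤ ((k : ℤ) - 1) ^ (e + 2) :=
        pow_le_pow_right₀ (by linarith) (by omega)
      nlinarith

/-- For odd `k ≥ 3`, in the `C_k`-process on the path `P_n`, the pair
`{0, (k-1)^{r-1} - (k²-4k+2)}` is not an edge at any time `i < r`. -/
theorem cycleProcess_path_lower (k n r : ℕ) (hk : 3 ≤ k) (hodd : Odd k) (m : ℕ)
    (hm : (m : ℤ) = ((k : ℤ) - 1) ^ (r - 1) - ((k : ℤ) ^ 2 - 4 * k + 2))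
    (hmn : m < n) :
    ∀ i < r, ¬ (cycleProcess k (SimpleGraph.pathGraph n) i).Adj
      ⟨0, lt_of_le_of_lt (Nat.zero_le m) hmn⟩ ⟨m, hmn⟩ := by
  have hK3 : (3 : ℤ) ≤ (k : ℤ) := by exact_mod_cast hk
  intro i hir hadj
  rcases Nat.eq_zero_or_pos m with rfl | hm0
  · exact hadj.ne (Fin.ext rfl)
  rcases Nat.eq_zero_or_pos i with rfl | hi1
  · -- time 0 : adjacency in the path graph forces m = 1
    simp only [cycleProcess] at hadj
    have h1 := SimpleGraph.pathGraph_adj.mp hadj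
    simp only at h1
    have hm1 : m = 1 := by omega
    subst hm1
    have : ((k : ℤ) - 1) ^ (r - 1) = (k : ℤ) ^ 2 - 4 * k + 3 := by
      rw [show ((1 : ℕ) : ℤ) = 1 from rfl] at hm; linarith
    exact pow_ne_F1 hk hodd (r - 1) this
  · -- time i ≥ 1 : use the semigroup invariant
    have h1 := key_invariant hk hodd i hi1 _ _ hadj
    have h2 : |((0 : ℕ) : ℤ) - (m : ℤ)| = (m : ℤ) := by
      simp [abs_of_nonneg]
    have hS : inS k (((k : ℤ) - 1) ^ i - (m : ℤ)) := by
      rw [← h2]; exact h1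
    have hr1 : 1 ≤ r := by omega
    rcases eq_or_lt_of_le (Nat.le_sub_one_of_lt hir) with hie | hilt
    · -- i = r - 1 : the value is exactly the Frobenius number
      apply not_inS_F hk hodd
      have he : ((k : ℤ) - 1) ^ i - (m : ℤ) = (k : ℤ) ^ 2 - 4 * k + 2 := by
        rw [hm, hie]; ring
      rwa [he] at hS
    · -- i < r - 1 : the value is negative
      have e1 : ((k : ℤ) - 1) ^ (i + 1) ≤ ((k : ℤ) - 1) ^ (r - 1) :=
        pow_le_pow_right₀ (by linarith) (by omega)
      have e2 : ((k : ℤ) - 1) ≤ ((k : ℤ) - 1) ^ i := by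
        calc ((k : ℤ) - 1) = ((k : ℤ) - 1) ^ 1 := (pow_one _).symm
        _ ≤ ((k : ℤ) - 1) ^ i := pow_le_pow_right₀ (by linarith) hi1
      have e3 : ((k : ℤ) - 1) ^ (i + 1) = ((k : ℤ) - 1) ^ i * ((k : ℤ) - 1) :=
        pow_succ _ _
      have e4 : ((k : ℤ) - 2) * ((k : ℤ) - 1) ≤ ((k : ℤ) - 2) * ((k : ℤ) - 1) ^ i :=
        mul_le_mul_of_nonneg_left e2 (by linarith)
      have h0 := inS_nonneg hk hS
      nlinarith
end

section
/- Let k ≥ 3, let (P^i) be the C_k-bootstrap process on the path P_{n'} with vertex set {0,...,n'-1}, and define D_i = {ℓ ∈ [n'-1] : xy ∈ E(P^i) whenever y - x = ℓ}. Then the (k-1)-fold sumset of D_i intersected with [n'-1] is contained in D_{i+1}. -/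
/-- `D_i` is the set of differences `ℓ ∈ [n'-1]` such that every pair of vertices of `P_{n'}`
at distance `ℓ` is adjacent at time `i` of the `C_k`-bootstrap process on `P_{n'}`. -/
def pathD (k n' i : ℕ) : Set ℕ :=
  {ℓ | 1 ≤ ℓ ∧ ℓ ≤ n' - 1 ∧ ∀ x y : Fin n', (x : ℕ) + ℓ = (y : ℕ) →
    (cycleProcess k (SimpleGraph.pathGraph n') i).Adj x y}

/-- From a chain of adjacent, pairwise-distinct vertices one gets a path. -/
lemma walk_of_chain {V : Type*} {G : SimpleGraph V} :
    ∀ (m : ℕ) (v : ℕ → V), (∀ j < m, G.Adj (v j) (v (j+1))) →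
    (∀ a ≤ m, ∀ b ≤ m, v a = v b → a = b) →
    ∃ p : G.Walk (v 0) (v m), p.IsPath ∧ p.length = m ∧
      ∀ u ∈ p.support, ∃ j ≤ m, u = v j := by
  intro m
  induction m with
  | zero =>
    intro v _ _
    refine ⟨SimpleGraph.Walk.nil, SimpleGraph.Walk.IsPath.nil, rfl, ?_⟩
    intro u hu
    simp only [SimpleGraph.Walk.support_nil, List.mem_singleton] at hu
    exact ⟨0, le_refl 0, hu⟩
  | succ m ih =>
    intro v hadj hinj
    obtain ⟨p, hp, hl, hsup⟩ := ih (fun j => v (j+1))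
      (fun j hj => hadj (j+1) (by omega))
      (fun a ha b hb h => by
        have := hinj (a+1) (by omega) (b+1) (by omega) h
        omega)
    refine ⟨SimpleGraph.Walk.cons (hadj 0 (by omega)) p, ?_, by simp [hl], ?_⟩
    · rw [SimpleGraph.Walk.cons_isPath_iff]
      refine ⟨hp, fun hmem => ?_⟩
      obtain ⟨j, hj, hej⟩ := hsup _ hmem
      have := hinj 0 (by omega) (j+1) (by omega) hej
      omega
    · intro u hu
      rw [SimpleGraph.Walk.support_cons, List.mem_cons] at hu
      rcases hu with h | h
      · exact ⟨0, by omega, h⟩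
      · obtain ⟨j, hj, hej⟩ := hsup _ h
        exact ⟨j+1, by omega, hej⟩

/-- The `(k-1)`-fold sumset of `D_i`, intersected with `[n'-1]`, is contained in `D_{i+1}`. -/
theorem pathD_sumset (k n' : ℕ) (hk : 3 ≤ k) (i : ℕ) (s : ℕ)
    (hs : ∃ f : Fin (k - 1) → ℕ, (∀ j, f j ∈ pathD k n' i) ∧ s = ∑ j, f j)
    (hub : s ≤ n' - 1) :
    s ∈ pathD k n' (i + 1) := by
  obtain ⟨f, hf, hsum⟩ := hs
  have hk1 : 1 ≤ k - 1 := by omega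
  have hf1 : ∀ j, 1 ≤ f j := fun j => (hf j).1
  have hs1 : 1 ≤ s := by
    calc 1 ≤ f ⟨0, by omega⟩ := hf1 _
      _ ≤ ∑ j, f j := Finset.single_le_sum (fun _ _ => Nat.zero_le _) (Finset.mem_univ _)
      _ = s := hsum.symm
  refine ⟨hs1, hub, ?_⟩
  intro x y hxy
  have hyn : (y : ℕ) < n' := y.isLt
  set G := cycleProcess k (SimpleGraph.pathGraph n') i with hG
  set F : ℕ → ℕ := fun t => if h : t < k - 1 then f ⟨t, h⟩ else 0 with hF
  set g : ℕ → ℕ := fun j => ∑ t ∈ Finset.range j, F t with hg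
  have hgk : g (k-1) = s := by
    have h1 : ∑ t ∈ Finset.range (k-1), F t = ∑ j : Fin (k-1), F j :=
      (Fin.sum_univ_eq_sum_range F (k-1)).symm
    have h2 : ∑ j : Fin (k-1), F j = ∑ j : Fin (k-1), f j := by
      apply Finset.sum_congr rfl
      intro j _
      simp only [hF]
      rw [dif_pos j.isLt]
    simp only [hg]
    rw [h1, h2, ← hsum]
  have hmono' : ∀ a b, a ≤ b → g a ≤ g b := fun a b h =>
    Finset.sum_le_sum_of_subset (Finset.range_subset_range.mpr h)
  have hgs : ∀ j, g j ≤ s := by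
    intro j
    rcases le_or_gt j (k-1) with h | h
    · rw [← hgk]; exact hmono' _ _ h
    · rw [← hgk]
      refine le_of_eq ?_
      refine (Finset.sum_subset (Finset.range_subset_range.mpr (by omega)) ?_).symm
      intro t ht hnt
      simp only [Finset.mem_range] at ht hnt
      exact dif_neg (by omega)
  have hxn : ∀ j, x + g j < n' := by
    intro j
    have := hgs j
    omega
  set v : ℕ → Fin n' := fun j => ⟨x + g j, hxn j⟩ with hv
  have hsucc : ∀ j, g (j+1) = g j + F j := fun j => Finset.sum_range_succ F j
  have hadj : ∀ j < k - 1, G.Adj (v j) (v (j+1)) := by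
    intro j hj
    have hFj : F j = f ⟨j, hj⟩ := dif_pos hj
    have := (hf ⟨j, hj⟩).2.2 (v j) (v (j+1)) (by
      simp only [hv]
      rw [hsucc j, hFj]
      ring)
    exact this
  have hmono : ∀ a b, a < b → b ≤ k - 1 → g a < g b := by
    intro a b hab hbk
    have h1 : 1 ≤ F a := by
      have : F a = f ⟨a, by omega⟩ := dif_pos (by omega)
      rw [this]; exact hf1 _
    have h2 : g a + F a = g (a+1) := (hsucc a).symm
    have h3 : g (a+1) ≤ g b := hmono' _ _ (by omega)
    omega
  have hinj : ∀ a ≤ k - 1, ∀ b ≤ k - 1, v a = v b → a = b := by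
    intro a ha b hb hvab
    have hval : x + g a = x + g b := congrArg Fin.val hvab
    rcases lt_trichotomy a b with h | h | h
    · exact absurd hval (by have := hmono a b h hb; omega)
    · exact h
    · exact absurd hval (by have := hmono b a h ha; omega)
  obtain ⟨p, hp, hl, _⟩ := walk_of_chain (G := G) (k-1) v hadj hinj
  have h0 : v 0 = x := by
    apply Fin.ext
    simp [hv, hg]
  have hk' : v (k-1) = y := by
    apply Fin.ext
    simp only [hv, hgk]
    omega
  have hne : x ≠ y := by
    intro h
    have : (x : ℕ) = y := congrArg Fin.val h
    omega
  show (cycleStep k G).Adj x y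
  rw [← h0, ← hk']
  exact Or.inr ⟨by rw [h0, hk']; exact hne, p, hp, hl⟩
end
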